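/- arXiv:1303.1701 — 2 statements merged into one kernel-verified Lean document; each statement's English description precedes it below -/
import Mathlib

section
/- Let λ > 0 with λ ≠ 1 and φ ∈ (-π, π]. Let t = λ + λ⁻¹. Then cosφ = (cos(3φ) + (Re(tr) + 1)·t) / (2·Re(tr) + t² - 1), where tr = λe^{iφ} + λ⁻¹e^{iφ} + e^{-2iφ} and Re(tr) denotes its real part. In particular the denominator 2·Re(tr) + t² - 1 is nonzero. -/
/-!
With `c = cos φ` and `t = λ + λ⁻¹`, one has `Re tr = t c + cos 2φ = t c + 2c² - 1`, so the claimed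
identity is the polynomial identity `c (2 Re tr + t² - 1) = 4c³ - 3c + (Re tr + 1) t`. The denominator
equals `(2c + t/2)² + 3(t² - 4)/4`, which is positive because `t > 2` for `λ > 0`, `λ ≠ 1`.
-/

open Real Complex

lemma two_lt_add_inv {x : ℝ} (hx : 0 < x) (hx1 : x ≠ 1) : 2 < x + x⁻¹ := by
  have hsq : 0 < (x - 1) ^ 2 := by positivity [sub_ne_zero.mpr hx1]
  have key : x + x⁻¹ - 2 = (x - 1) ^ 2 / x := by field_simp; ring
  linarith [div_pos hsq hx]

lemma re_trace_eq (a b φ : ℝ) :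
    ((a : ℂ) * exp (I * φ) + (b : ℂ) * exp (I * φ) + exp (-2 * I * φ)).re =
      (a + b) * Real.cos φ + Real.cos (2 * φ) := by
  have h₁ : I * (φ : ℂ) = (φ : ℂ) * I := mul_comm _ _
  have h₂ : -2 * I * (φ : ℂ) = ((-(2 * φ) : ℝ) : ℂ) * I := by push_cast; ring
  simp only [h₁, h₂, add_re, re_ofReal_mul, exp_ofReal_mul_I_re, Real.cos_neg]
  ring

lemma denominator_pos {t c : ℝ} (ht : 2 < t) : 0 < 2 * (t * c + (2 * c ^ 2 - 1)) + t ^ 2 - 1 := by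
  nlinarith [sq_nonneg (2 * c + t / 2)]

theorem stmt_2_general (lam φ : ℝ) (hlam : 0 < lam) (hlam1 : lam ≠ 1)
    (t : ℝ) (ht : t = lam + lam⁻¹)
    (tr : ℂ)
    (htr : tr = (lam : ℂ) * Complex.exp (Complex.I * φ) +
      (lam : ℂ)⁻¹ * Complex.exp (Complex.I * φ) + Complex.exp (-2 * Complex.I * φ)) :
    2 * tr.re + t ^ 2 - 1 ≠ 0 ∧
      Real.cos φ = (Real.cos (3 * φ) + (tr.re + 1) * t) / (2 * tr.re + t ^ 2 - 1) := by
  have hre : tr.re = t * Real.cos φ + (2 * Real.cos φ ^ 2 - 1) := by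
    rw [htr, ← ofReal_inv, re_trace_eq, ← ht, Real.cos_two_mul]
  have hD : 2 * tr.re + t ^ 2 - 1 ≠ 0 := by
    rw [hre]
    exact (denominator_pos (ht ▸ two_lt_add_inv hlam hlam1)).ne'
  refine ⟨hD, ?_⟩
  rw [eq_div_iff hD, hre, Real.cos_three_mul]
  ring

theorem stmt_2 (lam φ : ℝ) (hlam : 0 < lam) (hlam1 : lam ≠ 1)
    (hφ : φ ∈ Set.Ioc (-π) π)
    (t : ℝ) (ht : t = lam + lam⁻¹)
    (tr : ℂ)
    (htr : tr = (lam : ℂ) * Complex.exp (Complex.I * φ) +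
      (lam : ℂ)⁻¹ * Complex.exp (Complex.I * φ) + Complex.exp (-2 * Complex.I * φ)) :
    2 * tr.re + t ^ 2 - 1 ≠ 0 ∧
      Real.cos φ = (Real.cos (3 * φ) + (tr.re + 1) * t) / (2 * tr.re + t ^ 2 - 1) :=
  stmt_2_general lam φ hlam hlam1 t ht tr htr
end

section
/- Let K ⊆ ℂ be a subfield closed under complex conjugation, λ > 0 real with λ ≠ 1, φ ∈ (-π, π]. If λ ∈ K and λe^{iφ} + λ⁻¹e^{iφ} + e^{-2iφ} ∈ K, then e^{iφ} ∈ K. -/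
/-!
Put `z = e^{iφ}` and `m = λ + λ⁻¹ ∈ K`, so that the trace is `t = m z + z⁻²`, its conjugate
`t̄ = m z⁻¹ + z²` lies in `K`, and `c = z + z⁻¹ = 2 cos φ`. Then `t - t̄ = (z - z⁻¹)(m - c)` and
`t + t̄ + 2 = m c + c²` lie in `K`, hence so does `(t - t̄)² = (c² - 4)(m - c)²`. Reducing this
quartic in `c` modulo `c² = (m c + c²) - m c` leaves a polynomial that is linear in `c` with
nonzero leading coefficient, so `c ∈ K`. Since `m > 2 ≥ c`, dividing by `m - c` gives
`z - z⁻¹ ∈ K`, and `z = (c + (z - z⁻¹)) / 2`.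
-/

open Real Complex

namespace Subfield

variable {F : Type*} [Field F] {K : Subfield F}

theorem mem_of_mul_add_sq_mem {m c : F} (hm : m ∈ K) (hq : m * c + c ^ 2 ∈ K)
    (hw : (c ^ 2 - 4) * (m - c) ^ 2 ∈ K) (hQ : 4 * m * (m ^ 2 + m * c + c ^ 2 - 3) ≠ 0) :
    c ∈ K := by
  set q := m * c + c ^ 2 with hq_def
  have hc : c = (q ^ 2 + 4 * m ^ 2 * q - 4 * m ^ 2 - 4 * q - (c ^ 2 - 4) * (m - c) ^ 2) /
      (4 * m * (m ^ 2 + q - 3)) := by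
    rw [eq_div_iff (by rwa [hq_def, ← add_assoc])]
    ring
  rw [hc]
  apply_rules [add_mem, sub_mem, mul_mem, pow_mem, div_mem, ofNat_mem]

theorem mem_of_mul_add_inv_sq_mem {m z : F} (h2 : (2 : F) ≠ 0) (hz : z ≠ 0) (hm : m ∈ K)
    (ht : m * z + (z ^ 2)⁻¹ ∈ K) (ht' : m * z⁻¹ + z ^ 2 ∈ K) (hmc : m - (z + z⁻¹) ≠ 0)
    (hQ : m * (m ^ 2 + m * (z + z⁻¹) + (z + z⁻¹) ^ 2 - 3) ≠ 0) : z ∈ K := by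
  set c := z + z⁻¹ with hc_def
  have hA : (z - z⁻¹) * (m - c) ∈ K := by
    convert sub_mem ht ht' using 1
    rw [hc_def]
    field_simp
    ring
  have hq : m * c + c ^ 2 ∈ K := by
    convert add_mem (add_mem ht ht') (ofNat_mem K 2) using 1
    rw [hc_def]
    field_simp
    ring
  have hw : (c ^ 2 - 4) * (m - c) ^ 2 ∈ K := by
    convert mul_mem hA hA using 1
    rw [hc_def]
    field_simp
    ring
  have h4 : (4 : F) ≠ 0 := by
    rw [show (4 : F) = 2 * 2 by norm_num]
    exact mul_ne_zero h2 h2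
  have hcK : c ∈ K := mem_of_mul_add_sq_mem hm hq hw (by
    rw [mul_assoc]
    exact mul_ne_zero h4 hQ)
  have hs : z - z⁻¹ ∈ K := by
    simpa only [mul_div_cancel_right₀ _ hmc] using div_mem hA (sub_mem hm hcK)
  have hz_eq : z = (c + (z - z⁻¹)) / 2 := by
    rw [hc_def]
    field_simp
    ring
  rw [hz_eq]
  exact div_mem (add_mem hcK hs) (ofNat_mem K 2)

end Subfield

theorem two_lt_add_inv_s5 {a : ℝ} (ha : 0 < a) (ha1 : a ≠ 1) : 2 < a + a⁻¹ := by
  have h : a + a⁻¹ - 2 = (a - 1) ^ 2 / a := by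
    field_simp
    ring
  have : 0 < (a - 1) ^ 2 := by positivity [sub_ne_zero.mpr ha1]
  linarith [div_pos this ha]

theorem Complex.mem_of_mul_add_inv_sq_mem_of_norm_eq_one {K : Subfield ℂ}
    (hK : ∀ z ∈ K, starRingEnd ℂ z ∈ K) {m : ℝ} (hm : 2 < m) (hmK : (m : ℂ) ∈ K) {z : ℂ}
    (hz : ‖z‖ = 1) (ht : m * z + (z ^ 2)⁻¹ ∈ K) : z ∈ K := by
  have hz0 : z ≠ 0 := norm_ne_zero_iff.mp (hz ▸ one_ne_zero)
  have hconj : starRingEnd ℂ z = z⁻¹ := (inv_eq_conj hz).symm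
  have ht' : (m : ℂ) * z⁻¹ + z ^ 2 ∈ K := by
    simpa [hconj] using hK _ ht
  have hc : z + z⁻¹ = ((2 * z.re : ℝ) : ℂ) := by rw [← hconj, add_conj]
  obtain ⟨hre₁, hre₂⟩ := abs_le.mp (hz ▸ abs_re_le_norm z)
  refine Subfield.mem_of_mul_add_inv_sq_mem two_ne_zero hz0 hmK ht ht' ?_ ?_
  · rw [hc, ← ofReal_sub, ofReal_ne_zero]
    linarith
  · rw [hc]
    norm_cast
    have : 0 < m ^ 2 + m * (2 * z.re) + (2 * z.re) ^ 2 - 3 := by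
      nlinarith [sq_nonneg (2 * z.re + m / 2)]
    positivity

theorem stmt_5_general (K : Subfield ℂ) (hK : ∀ z ∈ K, (starRingEnd ℂ) z ∈ K)
    (lam φ : ℝ) (hlam : 0 < lam) (hlam1 : lam ≠ 1)
    (hlamK : (lam : ℂ) ∈ K)
    (htrK : (lam : ℂ) * Complex.exp (Complex.I * φ) +
      (lam : ℂ)⁻¹ * Complex.exp (Complex.I * φ) + Complex.exp (-2 * Complex.I * φ) ∈ K) :
    Complex.exp (Complex.I * φ) ∈ K := by
  have hmK : ((lam + lam⁻¹ : ℝ) : ℂ) ∈ K := by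
    push_cast
    exact add_mem hlamK (inv_mem hlamK)
  have hexp : Complex.exp (-2 * Complex.I * φ) = (Complex.exp (Complex.I * φ) ^ 2)⁻¹ := by
    rw [← Complex.exp_nat_mul, ← Complex.exp_neg]
    ring_nf
  refine Complex.mem_of_mul_add_inv_sq_mem_of_norm_eq_one hK (two_lt_add_inv_s5 hlam hlam1) hmK
    (norm_exp_I_mul_ofReal φ) ?_
  rw [hexp] at htrK
  convert htrK using 1
  push_cast
  ring

theorem stmt_5 (K : Subfield ℂ) (hK : ∀ z ∈ K, (starRingEnd ℂ) z ∈ K)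
    (lam φ : ℝ) (hlam : 0 < lam) (hlam1 : lam ≠ 1)
    (hφ : φ ∈ Set.Ioc (-π) π)
    (hlamK : (lam : ℂ) ∈ K)
    (htrK : (lam : ℂ) * Complex.exp (Complex.I * φ) +
      (lam : ℂ)⁻¹ * Complex.exp (Complex.I * φ) + Complex.exp (-2 * Complex.I * φ) ∈ K) :
    Complex.exp (Complex.I * φ) ∈ K :=
  stmt_5_general K hK lam φ hlam hlam1 hlamK htrK
end
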